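/- Let α and β be types, let F : β → α → β be a compression function such that the map (b, a) ↦ F b a from β × α to β is injective, and let init : β be an initial value that is not in the range of this map. Then the hash-chain function sending a list [x_1, ..., x_n] of elements of α to List.foldl F init [x_1, ..., x_n] is injective: two lists (possibly of different lengths) with the same chain digest are equal. -/
import Mathlib


/-- **Tamper-evidence of the hash chain.**
If the compression function `F : β → α → β` is injective as a map on pairs
`(b, a) ↦ F b a`, and the initial value `init` is not in the range of this map,
then the hash-chain digest `l ↦ List.foldl F init l` is injective on lists
(even of different lengths): equal digests force equal lists. -/
theorem hash_chain_injective {α β : Type*} (F : β → α → β)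
    (hF : Function.Injective (fun p : β × α => F p.1 p.2))
    (init : β) (hinit : init ∉ Set.range (fun p : β × α => F p.1 p.2)) :
    Function.Injective (fun l : List α => l.foldl F init) := by
  intro l₁ l₂ h
  simp only at h
  induction l₁ using List.reverseRecOn generalizing l₂ with
  | nil =>
    induction l₂ using List.reverseRecOn with
    | nil => rfl
    | append_singleton l a ih =>
      exfalso
      rw [List.foldl_append] at h
      exact hinit ⟨(l.foldl F init, a), h.symm⟩
  | append_singleton l a ih =>
    induction l₂ using List.reverseRecOn with
    | nil =>
      exfalso
      rw [List.foldl_append] at h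
      exact hinit ⟨(l.foldl F init, a), h⟩
    | append_singleton l' a' ih' =>
      rw [List.foldl_append, List.foldl_append] at h
      have := hF (a₁ := (l.foldl F init, a)) (a₂ := (l'.foldl F init, a')) h
      obtain ⟨h1, h2⟩ := Prod.mk.injEq .. ▸ this
      rw [ih h1, h2]
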